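/- arXiv:2105.01504 — 2 statements merged into one kernel-verified Lean document; each statement's English description precedes it below -/
import Mathlib

section
/- Let Σ be a unimodular fan in ℝ^n. Then the abelian group A¹(Σ) is torsion-free if and only if the subgroup of ℤ^n generated by the primitive generators {e_ρ : ρ ∈ Σ₁} of the rays of Σ equals ℤ^n ∩ span_ℝ(|Σ|), where |Σ| := ⋃_{σ∈Σ} σ. -/
/- Formalization of polyhedral-geometry notions: rational fans in ℝⁿ with lattice ℤⁿ,
tropical fans (balancing condition), conewise integral linear functions, Minkowski
weights, etc., following the paper "Homology of tropical fans" by Amini–Piquerez. -/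

open Classical MvPolynomial
open scoped TensorProduct DirectSum

noncomputable section

/-- The ambient space `ℝ^n`. -/
abbrev V (n : ℕ) : Type := Fin n → ℝ

/-- The inclusion of the lattice `ℤ^n` into `ℝ^n`. -/
def intVec {n : ℕ} (v : Fin n → ℤ) : V n := fun i => (v i : ℝ)

lemma intVec_zero {n : ℕ} : intVec (0 : Fin n → ℤ) = 0 := by
  funext i; simp [intVec]

lemma intVec_add {n : ℕ} (a b : Fin n → ℤ) : intVec (a + b) = intVec a + intVec b := by
  funext i; simp [intVec]

lemma intVec_neg {n : ℕ} (a : Fin n → ℤ) : intVec (-a) = -intVec a := by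
  funext i; simp [intVec]

/-- The pairing between `M = Hom(ℤ^n, ℤ)` (an element of which is represented by its
coefficient vector) and the lattice `ℤ^n`. -/
def pairZ {n : ℕ} (ℓ v : Fin n → ℤ) : ℤ := ∑ i, ℓ i * v i

/-- The pairing between an element of `M` and a vector of `ℝ^n`, i.e. the linear form
on `ℝ^n` defined by an element of `M`. -/
def pairR {n : ℕ} (ℓ : Fin n → ℤ) (x : V n) : ℝ := ∑ i, (ℓ i : ℝ) * x i

/-- `σ` is a rational cone: the set of nonnegative combinations of a finite set of
integer vectors. -/
def IsRationalCone {n : ℕ} (σ : Set (V n)) : Prop :=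
  ∃ S : Finset (Fin n → ℤ),
    σ = {x | ∃ lam : (Fin n → ℤ) → ℝ, (∀ v, 0 ≤ lam v) ∧ x = ∑ v ∈ S, lam v • intVec v}

/-- A cone is strongly convex if `σ ∩ (-σ) = {0}`. -/
def StronglyConvex {n : ℕ} (σ : Set (V n)) : Prop := σ ∩ (-σ) = {0}

/-- `τ` is a face of the cone `σ`: `τ = σ ∩ ker ℓ` for a linear form `ℓ` nonnegative
on `σ`. -/
def IsFaceOf {n : ℕ} (τ σ : Set (V n)) : Prop :=
  ∃ ℓ : (V n) →ₗ[ℝ] ℝ, (∀ x ∈ σ, 0 ≤ ℓ x) ∧ τ = σ ∩ {x | ℓ x = 0}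

/-- A (rational) fan in `ℝ^n`: a finite nonempty collection of strongly convex rational
cones, closed under taking faces, such that the intersection of any two cones is a face
of each of them. -/
structure IsFan {n : ℕ} (F : Finset (Set (V n))) : Prop where
  nonempty : F.Nonempty
  rat : ∀ σ ∈ F, IsRationalCone σ
  convex : ∀ σ ∈ F, StronglyConvex σ
  faces_mem : ∀ σ ∈ F, ∀ τ : Set (V n), IsFaceOf τ σ → τ ∈ F
  inter_face_left : ∀ σ ∈ F, ∀ σ' ∈ F, IsFaceOf (σ ∩ σ') σ
  inter_face_right : ∀ σ ∈ F, ∀ σ' ∈ F, IsFaceOf (σ ∩ σ') σ'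

/-- The dimension of a cone: the dimension of its real linear span. -/
def dimC {n : ℕ} (σ : Set (V n)) : ℕ := Module.finrank ℝ ↥(Submodule.span ℝ σ)

/-- `v ∈ N_σ := ℤ^n ∩ span_ℝ(σ)`. -/
def memLat {n : ℕ} (σ : Set (V n)) (v : Fin n → ℤ) : Prop :=
  intVec v ∈ Submodule.span ℝ σ

/-- `v` is a normal vector `n_{σ/τ}` for the codimension-one face `τ` of `σ`:
`v ∈ N_σ ∩ (σ + span_ℝ(τ))` and `N_τ + ℤ·v = N_σ`. -/
def IsNormalVector {n : ℕ} (σ τ : Set (V n)) (v : Fin n → ℤ) : Prop :=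
  memLat σ v ∧ (∃ y ∈ σ, ∃ z ∈ Submodule.span ℝ τ, intVec v = y + z) ∧
  ∀ w : Fin n → ℤ, memLat σ w ↔ ∃ u : Fin n → ℤ, ∃ k : ℤ, memLat τ u ∧ w = u + k • v

/-- The cones of `F` of dimension `d` containing `τ`. -/
def facets {n : ℕ} (F : Finset (Set (V n))) (d : ℕ) (τ : Set (V n)) :
    Finset (Set (V n)) :=
  F.filter fun σ => dimC σ = d ∧ τ ⊆ σ

/-- `Σ_k`: the `k`-dimensional cones of the fan. -/
def conesK {n : ℕ} (F : Finset (Set (V n))) (k : ℕ) : Finset (Set (V n)) :=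
  F.filter fun σ => dimC σ = k

/-- A tropical fan of pure dimension `d`: a rational fan, pure of dimension `d`
(every maximal cone has dimension `d`), satisfying the balancing condition: for every
`τ ∈ Σ_{d-1}` and any choice of normal vectors, `∑_{σ ⊃ τ} n_{σ/τ} ∈ N_τ`. -/
def IsTropicalFan {n : ℕ} (F : Finset (Set (V n))) (d : ℕ) : Prop :=
  IsFan F ∧ (∀ σ ∈ F, (∀ η ∈ F, σ ⊆ η → σ = η) → dimC σ = d) ∧
  ∀ τ ∈ F, dimC τ = d - 1 →
    ∀ v : Set (V n) → Fin n → ℤ,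
      (∀ σ ∈ facets F d τ, IsNormalVector σ τ (v σ)) →
      memLat τ (∑ σ ∈ facets F d τ, v σ)

/-- `f` is conewise integral linear on the fan `F`: on each cone it agrees with an
element of `M`. -/
def ConewiseLinear {n : ℕ} (F : Finset (Set (V n))) (f : V n → ℝ) : Prop :=
  ∀ σ ∈ F, ∃ ℓ : Fin n → ℤ, ∀ x ∈ σ, f x = pairR ℓ x

/-- A Minkowski weight of dimension `k` on the fan `F`: an integer weight on `Σ_k`
satisfying the balancing condition. -/
def IsMinkowskiWeight {n : ℕ} (F : Finset (Set (V n))) (k : ℕ) (w : Set (V n) → ℤ) :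
    Prop :=
  ∀ τ ∈ F, dimC τ = k - 1 →
    ∀ u : Set (V n) → Fin n → ℤ,
      (∀ σ ∈ facets F k τ, IsNormalVector σ τ (u σ)) →
      memLat τ (∑ σ ∈ facets F k τ, w σ • u σ)

/-- The rays (one-dimensional cones) of the fan. -/
def raysF {n : ℕ} (F : Finset (Set (V n))) : Finset (Set (V n)) :=
  F.filter fun ρ => dimC ρ = 1

/-- The type of rays of the fan `F`. -/
abbrev RayT {n : ℕ} (F : Finset (Set (V n))) : Type := {ρ : Set (V n) // ρ ∈ raysF F}

/-- The rays of the cone `σ` in the fan `F`. -/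
def raysOfCone {n : ℕ} (F : Finset (Set (V n))) (σ : Set (V n)) :
    Finset (Set (V n)) :=
  (raysF F).filter fun ρ => ρ ⊆ σ

/-- The fan `F` is simplicial: every cone has exactly `dim σ` rays and is generated by
them (every element of `σ` is a sum of elements of the rays of `σ`). -/
def IsSimplicial {n : ℕ} (F : Finset (Set (V n))) : Prop :=
  ∀ σ ∈ F, (raysOfCone F σ).card = dimC σ ∧
    σ = {x | ∃ y : Set (V n) → V n, (∀ ρ ∈ raysOfCone F σ, y ρ ∈ ρ) ∧
             x = ∑ ρ ∈ raysOfCone F σ, y ρ}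

/-- `v = e_ρ` is the primitive generator of the ray `ρ`: the generator of the rank-one
lattice `N_ρ` lying in `ρ`. -/
def IsPrimitiveGen {n : ℕ} (ρ : Set (V n)) (v : Fin n → ℤ) : Prop :=
  v ≠ 0 ∧ intVec v ∈ ρ ∧ ∀ w : Fin n → ℤ, memLat ρ w → ∃ k : ℤ, w = k • v

/-- The fan `F` with primitive ray generators `e` is unimodular: simplicial, and for
every cone `σ`, the vectors `e_ρ`, `ρ` a ray of `σ`, form a `ℤ`-basis of `N_σ`. -/
def IsUnimodular {n : ℕ} (F : Finset (Set (V n))) (e : Set (V n) → Fin n → ℤ) : Prop :=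
  IsSimplicial F ∧
  ∀ σ ∈ F, ∀ w : Fin n → ℤ, memLat σ w →
    ∃! c : Set (V n) → ℤ, (∀ ρ, ρ ∉ raysOfCone F σ → c ρ = 0) ∧
      w = ∑ ρ ∈ raysOfCone F σ, c ρ • e ρ

/-- The monomial `x_σ = ∏_{ρ ray of σ} x_ρ` in the polynomial ring on the rays. -/
def xCone {n : ℕ} (F : Finset (Set (V n))) (σ : Set (V n)) :
    MvPolynomial (RayT F) ℤ :=
  ∏ ρ ∈ Finset.univ.filter (fun ρ : RayT F => ρ.1 ⊆ σ), X ρ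

/-- The finite set `S` of rays forms the set of rays of a cone of `F`. -/
def FormsCone {n : ℕ} (F : Finset (Set (V n))) (S : Finset (RayT F)) : Prop :=
  ∃ σ ∈ F, ∀ ρ : RayT F, ρ ∈ S ↔ ρ.1 ⊆ σ

/-- The ideal `I` generated by the monomials `x_{ρ₁} ⋯ x_{ρ_k}` over subsets of
distinct rays not forming the set of rays of a cone of `F`. -/
def idealI {n : ℕ} (F : Finset (Set (V n))) : Ideal (MvPolynomial (RayT F) ℤ) :=
  Ideal.span {p | ∃ S : Finset (RayT F), ¬ FormsCone F S ∧ p = ∏ ρ ∈ S, X ρ}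

/-- The linear polynomial `x_ℓ = ∑_ρ ℓ(e_ρ) x_ρ` associated with `ℓ ∈ M`. -/
def xLin {n : ℕ} (F : Finset (Set (V n))) (e : Set (V n) → Fin n → ℤ)
    (ℓ : Fin n → ℤ) : MvPolynomial (RayT F) ℤ :=
  ∑ ρ : RayT F, C (pairZ ℓ (e ρ.1)) * X ρ

/-- The ideal `J` generated by the linear polynomials `∑_ρ ℓ(e_ρ) x_ρ`, `ℓ ∈ M`. -/
def idealJ {n : ℕ} (F : Finset (Set (V n))) (e : Set (V n) → Fin n → ℤ) :
    Ideal (MvPolynomial (RayT F) ℤ) :=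
  Ideal.span {p | ∃ ℓ : Fin n → ℤ, p = xLin F e ℓ}

/-- The defining ideal `I + J` of the Chow ring. -/
def chowIdeal {n : ℕ} (F : Finset (Set (V n))) (e : Set (V n) → Fin n → ℤ) :
    Ideal (MvPolynomial (RayT F) ℤ) := idealI F + idealJ F e

/-- The Chow ring `A•(Σ) = ℤ[x_ρ : ρ ∈ Σ₁]/(I + J)`. -/
abbrev ChowRing {n : ℕ} (F : Finset (Set (V n))) (e : Set (V n) → Fin n → ℤ) : Type :=
  MvPolynomial (RayT F) ℤ ⧸ chowIdeal F e

/-- The subgroup `Z^k(Σ) = ⊕_{σ ∈ Σ_k} ℤ·x_σ` of the polynomial ring. -/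
def Zgroup {n : ℕ} (F : Finset (Set (V n))) (k : ℕ) :
    AddSubgroup (MvPolynomial (RayT F) ℤ) :=
  AddSubgroup.closure {p | ∃ σ ∈ conesK F k, p = xCone F σ}

/-- The degree-`k` graded piece `A^k(Σ)` of the Chow ring: the image of the homogeneous
polynomials of degree `k` in the quotient. -/
def Apiece {n : ℕ} (F : Finset (Set (V n))) (e : Set (V n) → Fin n → ℤ) (k : ℕ) :
    AddSubgroup (ChowRing F e) :=
  AddSubgroup.closure
    {y | ∃ P : MvPolynomial (RayT F) ℤ, P.IsHomogeneous k ∧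
         y = Ideal.Quotient.mk (chowIdeal F e) P}

/-- The inclusion `ℤ^n → ℝ^n` as a homomorphism of additive groups. -/
def intVecHom (n : ℕ) : (Fin n → ℤ) →+ V n where
  toFun := intVec
  map_zero' := intVec_zero
  map_add' := intVec_add

/-- The support `|Σ| = ⋃_{σ ∈ Σ} σ` of the fan. -/
def suppF {n : ℕ} (F : Finset (Set (V n))) : Set (V n) :=
  ⋃₀ (F : Set (Set (V n)))

/-! The monomial generators of `I` have degree at least two, because the empty set and every
single ray form cones; so `I + J` meets the linear polynomials only in `J`, and `A¹(Σ)` is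
`ℤ^{Σ₁}` modulo the image of `ℓ ↦ (ℓ(e_ρ))_ρ`. It is torsion-free iff this image is saturated.
In a Smith normal form for `L = ⟨e_ρ⟩ ⊆ ℤ^n` with diagonal `a`, both this image and `L` are
spanned by vectors `a_i • g_i` for families `g` admitting dual coordinate functionals, so each is
saturated iff every `a_i` is a unit. Finally `L` is saturated iff `ℤ^n ⧸ L` is free, iff the
integral functionals vanishing on `L` cut out `L`, iff `L = ℤ^n ∩ span_ℝ L`; and
`span_ℝ |Σ| = span_ℝ L` since cones are generated by their rays. -/

open Submodule Module

namespace Submodule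

variable {R M : Type*} [CommRing R] [AddCommGroup M] [Module R M]

def IsSaturated (N : Submodule R M) : Prop :=
  ∀ (r : R) (x : M), r ≠ 0 → r • x ∈ N → x ∈ N

theorem IsSaturated.isTorsionFree_quotient [Nontrivial R] {N : Submodule R M}
    (hN : N.IsSaturated) : Module.IsTorsionFree R (M ⧸ N) := by
  refine .of_smul_eq_zero fun r x hrx => ?_
  induction x using Submodule.Quotient.induction_on with
  | H x =>
    rw [← Quotient.mk_smul, Quotient.mk_eq_zero] at hrx
    rw [Quotient.mk_eq_zero]
    exact or_iff_not_imp_left.2 fun hr => hN r x hr hrx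

theorem isSaturated_span_smul_iff [IsDomain R] [Module.IsTorsionFree R M] {ι : Type*}
    [Fintype ι] [DecidableEq ι] {g : ι → M} {u : ι → Module.Dual R M}
    (hug : ∀ i j, u i (g j) = if i = j then 1 else 0) (c : ι → R) :
    (span R (Set.range fun i => c i • g i)).IsSaturated ↔ ∀ i, c i = 0 ∨ IsUnit (c i) := by
  have hu_sum : ∀ (t : ι → R) j, u j (∑ i, t i • g i) = t j := fun t j => by
    simp [map_sum, hug]
  have hu_coeff : ∀ {x} (t : ι → R), ∑ i, t i • c i • g i = x → ∀ j, u j x = t j * c j :=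
    fun t ht j => by simp_rw [← ht, smul_smul, hu_sum]
  constructor
  · intro hsat i
    refine or_iff_not_imp_left.2 fun hci => ?_
    obtain ⟨t, ht⟩ := mem_span_range_iff_exists_fun R |>.1 <|
      hsat (c i) (g i) hci (subset_span ⟨i, rfl⟩)
    have h1 := hu_coeff t ht i
    rw [hug, if_pos rfl] at h1
    exact .of_mul_eq_one_right _ h1.symm
  · intro hc r x hr hrx
    obtain ⟨t, ht⟩ := mem_span_range_iff_exists_fun R |>.1 hrx
    have htc : ∀ j, t j * c j = r * u j x := fun j => by
      rw [← hu_coeff t ht j, map_smul, smul_eq_mul]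
    have hx : x = ∑ j, u j x • g j := smul_right_injective M hr <| by
      simp_rw [Finset.smul_sum, smul_smul, ← htc, ← smul_smul, ht]
    rw [hx]
    refine sum_mem fun j _ => ?_
    rcases hc j with h0 | ⟨v, hv⟩
    · have hux : r * u j x = 0 := by rw [← htc, h0, mul_zero]
      rw [(mul_eq_zero.1 hux).resolve_left hr, zero_smul]
      exact zero_mem _
    · rw [← one_smul R (g j), ← v.inv_mul, hv, ← smul_smul, smul_smul (u j x)]
      exact smul_mem _ _ (subset_span ⟨j, rfl⟩)

end Submodule

def Module.Dual.evalAt (R : Type*) {M κ : Type*} [CommRing R] [AddCommGroup M] [Module R M]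
    (E : κ → M) : Dual R M →ₗ[R] (κ → R) :=
  LinearMap.pi fun k => Dual.eval R M (E k)

@[simp] theorem Module.Dual.evalAt_apply {R M κ : Type*} [CommRing R] [AddCommGroup M]
    [Module R M] (E : κ → M) (ℓ : Dual R M) (k : κ) : Dual.evalAt R E ℓ k = ℓ (E k) := rfl

namespace Module.Basis.SmithNormalForm

variable {R M ι : Type*} [CommRing R] [AddCommGroup M] [Module R M] {r : ℕ}

section

variable {N : Submodule R M} (snf : SmithNormalForm N ι r)

theorem coord_f_apply_f (i j : Fin r) :
    snf.bM.coord (snf.f i) (snf.bM (snf.f j)) = if i = j then 1 else 0 := by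
  simp [Finsupp.single_apply, snf.f.injective.eq_iff, eq_comm]

theorem eq_span : N = span R (Set.range fun i => snf.a i • snf.bM (snf.f i)) := by
  calc N = map N.subtype (span R (Set.range snf.bN)) := by rw [snf.bN.span_eq, map_subtype_top]
    _ = span R (Set.range fun i => (snf.bN i : M)) := by rw [map_span, ← Set.range_comp]; rfl
    _ = _ := by simp_rw [snf.snf]

theorem isSaturated_iff [IsDomain R] [IsTorsionFree R M] :
    N.IsSaturated ↔ ∀ i, snf.a i = 0 ∨ IsUnit (snf.a i) := by
  have h := isSaturated_span_smul_iff snf.coord_f_apply_f snf.a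
  rwa [← snf.eq_span] at h

end

section evalAt

variable {κ : Type*} {E : κ → M} (snf : SmithNormalForm (span R (Set.range E)) ι r)

def coordsOfFamily (i : Fin r) : κ → R :=
  fun k => snf.bN.repr ⟨E k, subset_span ⟨k, rfl⟩⟩ i

theorem family_eq_sum (k : κ) :
    E k = ∑ i, snf.coordsOfFamily i k • snf.a i • snf.bM (snf.f i) := by
  calc E k = ((∑ i, snf.bN.repr ⟨E k, subset_span ⟨k, rfl⟩⟩ i • snf.bN i :
        span R (Set.range E)) : M) := by rw [snf.bN.sum_repr]
    _ = _ := by simp only [Submodule.coe_sum, Submodule.coe_smul, snf.snf, coordsOfFamily]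

theorem evalAt_eq_sum (ℓ : Dual R M) :
    Dual.evalAt R E ℓ = ∑ i, ℓ (snf.bM (snf.f i)) • snf.a i • snf.coordsOfFamily i := by
  funext k
  rw [Dual.evalAt_apply, snf.family_eq_sum k]
  simp only [map_sum, map_smul, smul_eq_mul, Finset.sum_apply, Pi.smul_apply]
  exact Finset.sum_congr rfl fun _ _ => by ring

theorem range_evalAt_eq_span :
    LinearMap.range (Dual.evalAt R E) =
      span R (Set.range fun i => snf.a i • snf.coordsOfFamily i) := by
  refine le_antisymm ?_ (span_le.2 ?_)
  · rintro _ ⟨ℓ, rfl⟩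
    rw [snf.evalAt_eq_sum]
    exact sum_mem fun i _ => smul_mem _ _ (subset_span ⟨i, rfl⟩)
  · rintro _ ⟨i, rfl⟩
    refine ⟨snf.bM.coord (snf.f i), ?_⟩
    simp only [snf.evalAt_eq_sum, coord_f_apply_f, ite_smul, one_smul, zero_smul,
      Finset.sum_ite_eq, Finset.mem_univ, if_true]

theorem exists_dual_coordsOfFamily [Fintype κ] : ∃ u : Fin r → Dual R (κ → R),
    ∀ i j, u i (snf.coordsOfFamily j) = if i = j then 1 else 0 := by
  choose c hc using fun i => (mem_span_range_iff_exists_fun R).1 (snf.bN i).2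
  refine ⟨fun i => dotProductEquiv R κ (c i), fun i j => ?_⟩
  have hbN : ∑ k, c i k • (⟨E k, subset_span ⟨k, rfl⟩⟩ : span R (Set.range E)) = snf.bN i :=
    Subtype.ext (by simpa using hc i)
  rw [← Finsupp.single_apply, ← snf.bN.repr_self, ← hbN]
  simp only [map_sum, map_smul, Finsupp.finsetSum_apply, Finsupp.smul_apply, smul_eq_mul,
    coordsOfFamily, dotProductEquiv_apply_apply, dotProduct]

theorem isSaturated_range_evalAt_iff [IsDomain R] [Fintype κ] :
    (LinearMap.range (Dual.evalAt R E)).IsSaturated ↔ ∀ i, snf.a i = 0 ∨ IsUnit (snf.a i) := by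
  obtain ⟨u, hu⟩ := snf.exists_dual_coordsOfFamily
  rw [snf.range_evalAt_eq_span]
  exact isSaturated_span_smul_iff hu _

end evalAt

end Module.Basis.SmithNormalForm

theorem Submodule.isSaturated_range_evalAt_iff {R M κ : Type*} [CommRing R] [IsDomain R]
    [IsPrincipalIdealRing R] [AddCommGroup M] [Module R M] [Module.Free R M] [Module.Finite R M]
    [Fintype κ] (E : κ → M) :
    (LinearMap.range (Dual.evalAt R E)).IsSaturated ↔ (span R (Set.range E)).IsSaturated := by
  obtain ⟨r, snf⟩ := (span R (Set.range E)).smithNormalForm (Module.Free.chooseBasis R M)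
  rw [snf.isSaturated_range_evalAt_iff, snf.isSaturated_iff]

theorem intVec_zsmul {n : ℕ} (m : ℤ) (v : Fin n → ℤ) : intVec (m • v) = (m : ℝ) • intVec v := by
  funext i; simp [intVec]

theorem exists_real_extension {n : ℕ} (f : Dual ℤ (Fin n → ℤ)) :
    ∃ g : V n →ₗ[ℝ] ℝ, ∀ v, g (intVec v) = f v := by
  refine ⟨∑ k, (f fun j => if k = j then 1 else 0 : ℝ) • LinearMap.proj k, fun v => ?_⟩
  rw [f.pi_apply_eq_sum_univ v]
  simp [intVec, mul_comm]

theorem span_real_image_span_int {n : ℕ} (S : Set (Fin n → ℤ)) :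
    span ℝ (intVec '' span ℤ S) = span ℝ (intVec '' S) := by
  have h : intVec '' (span ℤ S : Set (Fin n → ℤ)) = span ℤ (intVec '' S) := by
    simpa [intVecHom] using congrArg SetLike.coe (map_span (intVecHom n).toIntLinearMap S)
  rw [h, span_span_of_tower]

theorem isSaturated_iff_eq_comap {n : ℕ} (L : Submodule ℤ (Fin n → ℤ)) :
    L.IsSaturated ↔
      L.toAddSubgroup = (span ℝ (intVec '' L)).toAddSubgroup.comap (intVecHom n) := by
  constructor
  · intro hL
    have := hL.isTorsionFree_quotient
    ext w
    refine ⟨fun hw => subset_span ⟨w, hw, rfl⟩, fun hw => ?_⟩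
    change intVec w ∈ span ℝ (intVec '' L) at hw
    change w ∈ L
    -- `ℤ^n ⧸ L` is torsion-free and finitely generated, hence free
    rw [← Quotient.mk_eq_zero, ← forall_dual_apply_eq_zero_iff ℤ]
    intro φ
    obtain ⟨g, hg⟩ := exists_real_extension (φ ∘ₗ L.mkQ)
    have hgL : span ℝ (intVec '' L) ≤ LinearMap.ker g := span_le.2 <| by
      rintro _ ⟨v, hv, rfl⟩
      simp [hg, (Quotient.mk_eq_zero L).2 hv]
    simpa [hg] using hgL hw
  · intro hL r x hr hrx
    have hx : intVec x ∈ span ℝ (intVec '' L) := by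
      have h : intVec (r • x) ∈ span ℝ (intVec '' L) := subset_span ⟨_, hrx, rfl⟩
      rw [intVec_zsmul] at h
      have h' := smul_mem _ (r : ℝ)⁻¹ h
      rwa [smul_smul, inv_mul_cancel₀ (by exact_mod_cast hr), one_smul] at h'
    exact (AddSubgroup.ext_iff.1 hL x).2 hx

section Fan

variable {n : ℕ}

theorem IsRationalCone.smul_mem {σ : Set (V n)} (h : IsRationalCone σ) {x : V n} (hx : x ∈ σ)
    {t : ℝ} (ht : 0 ≤ t) : t • x ∈ σ := by
  obtain ⟨S, rfl⟩ := h
  obtain ⟨lam, hlam, rfl⟩ := hx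
  exact ⟨fun v => t * lam v, fun v => mul_nonneg ht (hlam v),
    by simp [Finset.smul_sum, smul_smul]⟩

theorem IsPrimitiveGen.intVec_ne_zero {ρ : Set (V n)} {v : Fin n → ℤ}
    (hv : IsPrimitiveGen ρ v) : intVec v ≠ 0 := fun h =>
  hv.1 <| funext fun i => by simpa [intVec] using congrFun h i

theorem IsPrimitiveGen.exists_nonneg_smul_eq {ρ : Set (V n)} {v : Fin n → ℤ}
    (hv : IsPrimitiveGen ρ v) (hrat : IsRationalCone ρ) (hconv : StronglyConvex ρ)
    (hdim : dimC ρ = 1) {x : V n} (hx : x ∈ ρ) : ∃ c : ℝ, 0 ≤ c ∧ x = c • intVec v := by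
  have hspan : span ℝ {intVec v} = span ℝ ρ :=
    eq_of_le_of_finrank_eq (span_mono (Set.singleton_subset_iff.2 hv.2.1))
      (by rw [finrank_span_singleton hv.intVec_ne_zero]; exact hdim.symm)
  obtain ⟨c, rfl⟩ := mem_span_singleton.1 (hspan ▸ subset_span hx : x ∈ span ℝ {intVec v})
  rcases le_or_gt 0 c with hc | hc
  · exact ⟨c, hc, rfl⟩
  · have hneg : c • intVec v ∈ ρ ∩ -ρ :=
      ⟨hx, by rw [Set.mem_neg, ← neg_smul]; exact hrat.smul_mem hv.2.1 (by linarith)⟩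
    rw [hconv, Set.mem_singleton_iff] at hneg
    exact ⟨0, le_rfl, by rw [hneg, zero_smul]⟩

variable {F : Finset (Set (V n))} {e : Set (V n) → Fin n → ℤ}

theorem mem_raysF {ρ : Set (V n)} : ρ ∈ raysF F ↔ ρ ∈ F ∧ dimC ρ = 1 := Finset.mem_filter

theorem IsFan.exists_nonneg_smul_eq (hF : IsFan F) {ρ : Set (V n)} (hρ : ρ ∈ raysF F)
    {v : Fin n → ℤ} (hv : IsPrimitiveGen ρ v) {x : V n} (hx : x ∈ ρ) :
    ∃ c : ℝ, 0 ≤ c ∧ x = c • intVec v :=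
  hv.exists_nonneg_smul_eq (hF.rat ρ (mem_raysF.1 hρ).1) (hF.convex ρ (mem_raysF.1 hρ).1)
    (mem_raysF.1 hρ).2 hx

theorem IsFan.singleton_zero_mem (hF : IsFan F) {ρ : Set (V n)} (hρ : ρ ∈ raysF F) {v : Fin n → ℤ}
    (hv : IsPrimitiveGen ρ v) : ({0} : Set (V n)) ∈ F := by
  obtain ⟨ℓ, hℓ⟩ := Projective.exists_dual_eq_one ℝ hv.intVec_ne_zero
  refine hF.faces_mem ρ (mem_raysF.1 hρ).1 _ ⟨ℓ, fun x hx => ?_, ?_⟩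
  · obtain ⟨c, hc, rfl⟩ := hF.exists_nonneg_smul_eq hρ hv hx
    simpa [hℓ] using hc
  · ext x
    constructor
    · rintro rfl
      exact ⟨by simpa using (hF.rat ρ (mem_raysF.1 hρ).1).smul_mem hv.2.1 le_rfl, by simp⟩
    · rintro ⟨hx, hℓx⟩
      obtain ⟨c, -, rfl⟩ := hF.exists_nonneg_smul_eq hρ hv hx
      simp_all

theorem IsFan.ray_eq_of_subset (hF : IsFan F) (he : ∀ ρ ∈ raysF F, IsPrimitiveGen ρ (e ρ))
    {ρ ρ' : Set (V n)} (hρ : ρ ∈ raysF F) (hρ' : ρ' ∈ raysF F) (hsub : ρ' ⊆ ρ) : ρ' = ρ := by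
  obtain ⟨c, hc, hvc⟩ := hF.exists_nonneg_smul_eq hρ (he ρ hρ) (hsub (he ρ' hρ').2.1)
  have hc0 : c ≠ 0 := by
    rintro rfl
    exact (he ρ' hρ').intVec_ne_zero (by rw [hvc, zero_smul])
  refine subset_antisymm hsub fun x hx => ?_
  obtain ⟨t, ht, rfl⟩ := hF.exists_nonneg_smul_eq hρ (he ρ hρ) hx
  have hx' : t • intVec (e ρ) = (t / c) • intVec (e ρ') := by
    rw [hvc, smul_smul, div_mul_cancel₀ _ hc0]
  rw [hx']
  exact (hF.rat ρ' (mem_raysF.1 hρ').1).smul_mem (he ρ' hρ').2.1 (div_nonneg ht hc)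

theorem IsFan.formsCone_empty (hF : IsFan F) (he : ∀ ρ ∈ raysF F, IsPrimitiveGen ρ (e ρ)) :
    FormsCone F ∅ := by
  rcases (raysF F).eq_empty_or_nonempty with hempty | ⟨ρ, hρ⟩
  · obtain ⟨σ, hσ⟩ := hF.nonempty
    exact ⟨σ, hσ, fun ρ => absurd ρ.2 (by simp [hempty])⟩
  · refine ⟨{0}, hF.singleton_zero_mem hρ (he ρ hρ), fun ρ' => ?_⟩
    simp only [Finset.notMem_empty, false_iff, Set.subset_singleton_iff]
    exact fun h => (he ρ' ρ'.2).intVec_ne_zero (h _ (he ρ' ρ'.2).2.1)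

theorem IsFan.formsCone_singleton (hF : IsFan F) (he : ∀ ρ ∈ raysF F, IsPrimitiveGen ρ (e ρ))
    (ρ : RayT F) : FormsCone F {ρ} :=
  ⟨ρ, (mem_raysF.1 ρ.2).1, fun ρ' => by
    rw [Finset.mem_singleton]
    exact ⟨fun h => h ▸ subset_rfl, fun h => Subtype.ext (hF.ray_eq_of_subset he ρ.2 ρ'.2 h)⟩⟩

theorem IsFan.two_le_card_of_not_formsCone (hF : IsFan F)
    (he : ∀ ρ ∈ raysF F, IsPrimitiveGen ρ (e ρ)) {S : Finset (RayT F)} (hS : ¬ FormsCone F S) :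
    2 ≤ S.card := by
  rcases S.eq_empty_or_nonempty with rfl | ⟨ρ, hρ⟩
  · exact absurd (hF.formsCone_empty he) hS
  · by_contra hlt
    have : S = {ρ} := Finset.eq_singleton_iff_unique_mem.2
      ⟨hρ, fun ρ' hρ' => Finset.card_le_one.1 (by omega) _ hρ' _ hρ⟩
    exact hS (this ▸ hF.formsCone_singleton he ρ)

theorem span_suppF_eq (hF : IsFan F) (he : ∀ ρ ∈ raysF F, IsPrimitiveGen ρ (e ρ))
    (hs : IsSimplicial F) :
    span ℝ (suppF F) = span ℝ (intVec '' {v | ∃ ρ ∈ raysF F, v = e ρ}) := by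
  refine le_antisymm (span_le.2 ?_) (span_le.2 ?_)
  · rintro x ⟨σ, hσ, hx⟩
    rw [(hs σ hσ).2] at hx
    obtain ⟨y, hy, rfl⟩ := hx
    refine sum_mem fun ρ hρ => ?_
    have hρ' : ρ ∈ raysF F := (Finset.mem_filter.1 hρ).1
    obtain ⟨c, -, hc⟩ := hF.exists_nonneg_smul_eq hρ' (he ρ hρ') (hy ρ hρ)
    rw [hc]
    exact smul_mem _ _ (subset_span ⟨e ρ, ⟨ρ, hρ', rfl⟩, rfl⟩)
  · rintro _ ⟨_, ⟨ρ, hρ, rfl⟩, rfl⟩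
    exact subset_span ⟨ρ, (mem_raysF.1 hρ).1, (he ρ hρ).2.1⟩

end Fan

namespace MvPolynomial

variable {σ R : Type*} [CommRing R]

def linearPart : MvPolynomial σ R →ₗ[R] (σ → R) :=
  LinearMap.pi fun i => lcoeff R (Finsupp.single i 1)

@[simp] theorem linearPart_apply (P : MvPolynomial σ R) (i : σ) :
    linearPart P i = coeff (Finsupp.single i 1) P := rfl

theorem linearPart_mul (p q : MvPolynomial σ R) :
    linearPart (p * q) = constantCoeff p • linearPart q + constantCoeff q • linearPart p := by
  funext i
  simp [coeff_mul, Finsupp.antidiagonal_single, Finset.Nat.antidiagonal_succ, mul_comm,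
    constantCoeff_eq]

theorem IsHomogeneous.constantCoeff_eq_zero {P : MvPolynomial σ R} {d : ℕ}
    (hP : P.IsHomogeneous d) (hd : d ≠ 0) : constantCoeff P = 0 := by
  rw [constantCoeff_eq]
  exact hP.coeff_eq_zero (by simpa using hd.symm)

theorem IsHomogeneous.linearPart_eq_zero {P : MvPolynomial σ R} {d : ℕ}
    (hP : P.IsHomogeneous d) (hd : d ≠ 1) : linearPart P = 0 := by
  funext i
  exact hP.coeff_eq_zero (by simpa using hd.symm)

def linearPartIdeal (W : Submodule R (σ → R)) : Ideal (MvPolynomial σ R) where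
  carrier := {P | constantCoeff P = 0 ∧ linearPart P ∈ W}
  add_mem' hP hQ := ⟨by simp [hP.1, hQ.1], by simpa using W.add_mem hP.2 hQ.2⟩
  zero_mem' := ⟨map_zero _, by simp⟩
  smul_mem' a P hP := ⟨by simp [hP.1], by
    simpa [linearPart_mul, hP.1] using W.smul_mem (constantCoeff a) hP.2⟩

variable [Fintype σ]

def linearPoly (x : σ → R) : MvPolynomial σ R := ∑ i, C (x i) * X i

theorem isHomogeneous_linearPoly (x : σ → R) : (linearPoly x).IsHomogeneous 1 :=
  IsHomogeneous.sum _ _ _ fun i _ => isHomogeneous_C_mul_X (x i) i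

@[simp] theorem linearPart_linearPoly (x : σ → R) : linearPart (linearPoly x) = x := by
  funext i
  simp [linearPoly, coeff_sum, coeff_C_mul, coeff_X, Finsupp.single_left_inj one_ne_zero]

theorem IsHomogeneous.linearPoly_linearPart {P : MvPolynomial σ R} (hP : P.IsHomogeneous 1) :
    linearPoly (linearPart P) = P := by
  ext d
  by_cases hd : d.degree = 1
  · obtain ⟨i, rfl⟩ : d ∈ Set.range fun i => Finsupp.single i 1 := Finsupp.range_single_one ▸ hd
    exact congrFun (linearPart_linearPoly (linearPart P)) i
  · rw [hP.coeff_eq_zero hd, (isHomogeneous_linearPoly _).coeff_eq_zero hd]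

end MvPolynomial

section Chow

variable {n : ℕ} {F : Finset (Set (V n))} {e : Set (V n) → Fin n → ℤ}

theorem xLin_eq_linearPoly (ℓ : Fin n → ℤ) :
    xLin F e ℓ = linearPoly (Dual.evalAt ℤ (fun ρ : RayT F => e ρ) (dotProductEquiv ℤ _ ℓ)) :=
  rfl

theorem chowIdeal_le_linearPartIdeal (hF : IsFan F)
    (he : ∀ ρ ∈ raysF F, IsPrimitiveGen ρ (e ρ)) :
    chowIdeal F e ≤ linearPartIdeal (LinearMap.range (Dual.evalAt ℤ fun ρ : RayT F => e ρ)) := by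
  rw [chowIdeal, Submodule.add_eq_sup]
  refine sup_le (Ideal.span_le.2 ?_) (Ideal.span_le.2 ?_)
  · rintro _ ⟨S, hS, rfl⟩
    have hhom : (∏ ρ ∈ S, X ρ : MvPolynomial (RayT F) ℤ).IsHomogeneous S.card := by
      simpa using IsHomogeneous.prod S X (fun _ => 1) fun ρ _ => isHomogeneous_X ℤ ρ
    have h2 := hF.two_le_card_of_not_formsCone he hS
    refine ⟨hhom.constantCoeff_eq_zero (by omega), ?_⟩
    rw [hhom.linearPart_eq_zero (by omega)]
    exact Submodule.zero_mem _
  · rintro _ ⟨ℓ, rfl⟩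
    rw [xLin_eq_linearPoly]
    exact ⟨(isHomogeneous_linearPoly _).constantCoeff_eq_zero one_ne_zero,
      by simp only [linearPart_linearPoly, LinearMap.mem_range_self]⟩

theorem mk_chowIdeal_eq_zero_iff (hF : IsFan F) (he : ∀ ρ ∈ raysF F, IsPrimitiveGen ρ (e ρ))
    {P : MvPolynomial (RayT F) ℤ} (hP : P.IsHomogeneous 1) :
    Ideal.Quotient.mk (chowIdeal F e) P = 0 ↔
      linearPart P ∈ LinearMap.range (Dual.evalAt ℤ fun ρ : RayT F => e ρ) := by
  rw [Ideal.Quotient.eq_zero_iff_mem]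
  refine ⟨fun h => (chowIdeal_le_linearPartIdeal hF he h).2, ?_⟩
  rintro ⟨f, hf⟩
  rw [← hP.linearPoly_linearPart, ← hf, ← (dotProductEquiv ℤ (Fin n)).apply_symm_apply f,
    ← xLin_eq_linearPoly, chowIdeal, Submodule.add_eq_sup]
  exact Submodule.mem_sup_right (Ideal.subset_span ⟨_, rfl⟩)

theorem exists_isHomogeneous_of_mem_apiece {k : ℕ} {y : ChowRing F e} (hy : y ∈ Apiece F e k) :
    ∃ P : MvPolynomial (RayT F) ℤ, P.IsHomogeneous k ∧ y = Ideal.Quotient.mk _ P := by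
  induction hy using AddSubgroup.closure_induction with
  | mem y hy => exact hy
  | zero => exact ⟨0, isHomogeneous_zero _ _ _, (map_zero _).symm⟩
  | add y z _ _ hy hz =>
    obtain ⟨P, hP, rfl⟩ := hy
    obtain ⟨Q, hQ, rfl⟩ := hz
    exact ⟨P + Q, hP.add hQ, (map_add _ _ _).symm⟩
  | neg y _ hy =>
    obtain ⟨P, hP, rfl⟩ := hy
    exact ⟨-P, hP.neg, (map_neg _ _).symm⟩

theorem torsionFree_apiece_one_iff (hF : IsFan F)
    (he : ∀ ρ ∈ raysF F, IsPrimitiveGen ρ (e ρ)) :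
    (∀ (y : Apiece F e 1) (m : ℤ), m • y = 0 → m = 0 ∨ y = 0) ↔
      (LinearMap.range (Dual.evalAt ℤ fun ρ : RayT F => e ρ)).IsSaturated := by
  have hsmul {P : MvPolynomial (RayT F) ℤ} (hP : P.IsHomogeneous 1) (m : ℤ) :
      (m • P).IsHomogeneous 1 := by
    rw [smul_eq_C_mul]
    exact hP.C_mul m
  constructor
  · intro htf m x hm hmx
    have hy : Ideal.Quotient.mk _ (linearPoly x) ∈ Apiece F e 1 :=
      AddSubgroup.subset_closure ⟨_, isHomogeneous_linearPoly x, rfl⟩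
    have hmy : m • (⟨_, hy⟩ : Apiece F e 1) = 0 := Subtype.ext <| by
      change m • Ideal.Quotient.mk _ (linearPoly x) = 0
      rw [← map_zsmul, mk_chowIdeal_eq_zero_iff hF he (hsmul (isHomogeneous_linearPoly x) m),
        map_zsmul, linearPart_linearPoly]
      exact hmx
    rw [← linearPart_linearPoly x, ← mk_chowIdeal_eq_zero_iff hF he (isHomogeneous_linearPoly x)]
    exact congrArg Subtype.val ((htf _ m hmy).resolve_left hm)
  · rintro hsat ⟨y, hy⟩ m hmy
    obtain ⟨P, hP, rfl⟩ := exists_isHomogeneous_of_mem_apiece hy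
    refine or_iff_not_imp_left.2 fun hm => Subtype.ext ?_
    have h1 : Ideal.Quotient.mk (chowIdeal F e) (m • P) = 0 := by
      rw [map_zsmul]
      exact congrArg Subtype.val hmy
    rw [mk_chowIdeal_eq_zero_iff hF he (hsmul hP m), map_zsmul] at h1
    exact (mk_chowIdeal_eq_zero_iff hF he hP).2 (hsat m _ hm h1)

end Chow


/-- For a unimodular fan `Σ` in `ℝ^n`, the abelian group `A¹(Σ)` is
torsion-free if and only if the subgroup of `ℤ^n` generated by the primitive
generators `e_ρ`, `ρ ∈ Σ₁`, equals `ℤ^n ∩ span_ℝ(|Σ|)`. -/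
theorem A1_torsionFree_iff {n : ℕ}
    (F : Finset (Set (V n))) (hF : IsFan F)
    (e : Set (V n) → Fin n → ℤ) (he : ∀ ρ ∈ raysF F, IsPrimitiveGen ρ (e ρ))
    (hu : IsUnimodular F e) :
    (∀ (y : Apiece F e 1) (m : ℤ), m • y = 0 → m = 0 ∨ y = 0) ↔
      AddSubgroup.closure {v : Fin n → ℤ | ∃ ρ ∈ raysF F, v = e ρ}
        = AddSubgroup.comap (intVecHom n)
            (Submodule.span ℝ (suppF F)).toAddSubgroup := by
  have hrange : {v : Fin n → ℤ | ∃ ρ ∈ raysF F, v = e ρ} = Set.range fun ρ : RayT F => e ρ := by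
    ext v
    simp [eq_comm]
  rw [torsionFree_apiece_one_iff hF he, isSaturated_range_evalAt_iff, isSaturated_iff_eq_comap,
    span_suppF_eq hF he hu.1, span_real_image_span_int, ← span_int_eq_addSubgroupClosure, hrange]

end
end

section
/- Let Σ ⊂ ℝ^n be a tropical fan of pure dimension d and Σ' ⊂ ℝ^{n'} a tropical fan of pure dimension d', and assume both Σ and Σ' are locally irreducible. Then the product Σ×Σ' is a tropical fan of pure dimension d+d' in ℝ^{n+n'} and is locally irreducible, i.e., Σ×Σ' is irreducible at every cone σ×σ' with σ ∈ Σ and σ' ∈ Σ'. -/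
/- Formalization of polyhedral-geometry notions: rational fans in ℝⁿ with lattice ℤⁿ,
tropical fans (balancing condition), conewise integral linear functions, Minkowski
weights, etc., following the paper "Homology of tropical fans" by Amini–Piquerez. -/

open Classical MvPolynomial
open scoped TensorProduct DirectSum

noncomputable section

/-- The product `σ × σ'` of a cone in `ℝ^n` and a cone in `ℝ^{n'}`, inside
`ℝ^{n+n'}`. -/
def prodCone {n n' : ℕ} (σ : Set (V n)) (σ' : Set (V n')) : Set (V (n + n')) :=
  {x | (fun i : Fin n => x (Fin.castAdd n' i)) ∈ σ ∧
       (fun j : Fin n' => x (Fin.natAdd n j)) ∈ σ'}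

/-- The product fan `Σ × Σ'` in `ℝ^{n+n'}`: the collection of cones `σ × σ'`. -/
def prodFan {n n' : ℕ} (F : Finset (Set (V n))) (F' : Finset (Set (V n'))) :
    Finset (Set (V (n + n'))) :=
  (F ×ˢ F').image fun p => prodCone p.1 p.2

/-- The tropical fan `F` of dimension `d` is irreducible at the cone `η`: every integer
weight on the facets of the star of `η` satisfying the balancing condition at every
codimension-one cone of the star of `η` is constant. -/
def IrreducibleAt {n : ℕ} (F : Finset (Set (V n))) (d : ℕ) (η : Set (V n)) : Prop :=
  ∀ w : Set (V n) → ℤ,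
    (∀ τ ∈ F, dimC τ = d - 1 → η ⊆ τ →
      ∀ u : Set (V n) → Fin n → ℤ,
        (∀ σ ∈ facets F d τ, IsNormalVector σ τ (u σ)) →
        memLat τ (∑ σ ∈ facets F d τ, w σ • u σ)) →
    ∀ σ ∈ facets F d η, ∀ σ' ∈ facets F d η, w σ = w σ'

/-!
Write `ℝ^{n+n'} = ℝ^n × ℝ^{n'}`. Spans and lattices of product cones split, so
`dim (σ × σ') = dim σ + dim σ'`, and the fan axioms pass to `Σ × Σ'` factorwise.
A codimension-one cone of `Σ × Σ'` is `τ × τ'` with one factor, say `τ`, of full dimension and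
`τ'` of codimension one. Its facets are the `τ × σ'` with `σ' ⊃ τ'`, and `v` is a normal vector of
`τ × σ'` over `τ × τ'` exactly when its second component is a normal vector of `σ'` over `τ'` and
its first lies in `N_τ`. Hence a weight `w` is balanced at `τ × τ'` iff `σ' ↦ w (τ × σ')` is
balanced at `τ'` in `Σ'`. With `w = 1` this is the balancing of `Σ × Σ'`. For a weight balanced
around `η × η'` it says that `σ ↦ w (σ × σ')` is balanced around `η`, hence constant by
irreducibility of `Σ` at `η`, and likewise in `σ'`.
-/

section Coordinates

variable {n n' : ℕ} {σ : Set (V n)} {σ' : Set (V n')}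

def finSplit (R : Type*) [Semiring R] : (Fin (n + n') → R) ≃ₗ[R] (Fin n → R) × (Fin n' → R) :=
  { (Fin.appendEquiv n n').symm with
    map_add' := fun _ _ => rfl
    map_smul' := fun _ _ => rfl }

lemma finSplit_intVec (v : Fin (n + n') → ℤ) :
    finSplit ℝ (intVec v) = (intVec (finSplit ℤ v).1, intVec (finSplit ℤ v).2) := rfl

lemma intVec_finSplit_symm (p : (Fin n → ℤ) × (Fin n' → ℤ)) :
    intVec ((finSplit ℤ).symm p) = (finSplit ℝ).symm (intVec p.1, intVec p.2) := by
  apply (finSplit ℝ).injective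
  rw [finSplit_intVec, LinearEquiv.apply_symm_apply, LinearEquiv.apply_symm_apply]

lemma prodCone_eq_preimage :
    prodCone σ σ' = finSplit ℝ ⁻¹' σ ×ˢ σ' := rfl

lemma prodCone_eq_image :
    prodCone σ σ' = (finSplit ℝ).symm '' σ ×ˢ σ' := by
  rw [prodCone_eq_preimage, LinearEquiv.image_symm_eq_preimage]

lemma mem_prodCone {x : V (n + n')} :
    x ∈ prodCone σ σ' ↔ (finSplit ℝ x).1 ∈ σ ∧ (finSplit ℝ x).2 ∈ σ' := Iff.rfl

end Coordinates

lemma Submodule.finrank_prod {K M M' : Type*} [DivisionRing K] [AddCommGroup M] [AddCommGroup M']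
    [Module K M] [Module K M'] [FiniteDimensional K M] [FiniteDimensional K M']
    (p : Submodule K M) (q : Submodule K M') :
    Module.finrank K (p.prod q) = Module.finrank K p + Module.finrank K q := by
  rw [← Module.finrank_prod, ← LinearMap.finrank_range_of_inj (f := p.subtype.prodMap q.subtype),
    LinearMap.range_prodMap, Submodule.range_subtype, Submodule.range_subtype]
  exact Prod.map_injective.mpr ⟨p.injective_subtype, q.injective_subtype⟩

section Lattices

variable {n : ℕ} {σ τ : Set (V n)} {u v : Fin n → ℤ}

lemma memLat_zero : memLat σ 0 := by
  rw [memLat, intVec_zero]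
  exact zero_mem _

lemma memLat_add (hu : memLat σ u) (hv : memLat σ v) : memLat σ (u + v) := by
  rw [memLat, intVec_add]
  exact add_mem hu hv

lemma memLat_neg (hv : memLat σ v) : memLat σ (-v) := by
  rw [memLat, intVec_neg]
  exact neg_mem hv

lemma memLat_sub (hu : memLat σ u) (hv : memLat σ v) : memLat σ (u - v) :=
  sub_eq_add_neg u v ▸ memLat_add hu (memLat_neg hv)

lemma memLat_zsmul (k : ℤ) (hv : memLat σ v) : memLat σ (k • v) := by
  have : intVec (k • v) = k • intVec v := by ext; simp [intVec]
  rw [memLat, this]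
  exact zsmul_mem hv k

lemma memLat_sum {ι : Type*} {s : Finset ι} {f : ι → Fin n → ℤ} (h : ∀ i ∈ s, memLat σ (f i)) :
    memLat σ (∑ i ∈ s, f i) :=
  Finset.sum_induction f (memLat σ) (fun _ _ => memLat_add) memLat_zero h

lemma memLat_mono (h : τ ⊆ σ) (hv : memLat τ v) : memLat σ v :=
  Submodule.span_mono h hv

lemma memLat_iff_exists_add_zsmul_iff (hτσ : τ ⊆ σ) (hv : memLat σ v) :
    (∀ w, memLat σ w ↔ ∃ u : Fin n → ℤ, ∃ k : ℤ, memLat τ u ∧ w = u + k • v) ↔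
      ∀ w, memLat σ w → ∃ k : ℤ, memLat τ (w - k • v) := by
  constructor
  · intro h w hw
    obtain ⟨u, k, hu, rfl⟩ := (h w).mp hw
    exact ⟨k, by rwa [add_sub_cancel_right]⟩
  · intro h w
    constructor
    · intro hw
      obtain ⟨k, hk⟩ := h w hw
      exact ⟨_, k, hk, (sub_add_cancel w _).symm⟩
    · rintro ⟨u, k, hu, rfl⟩
      exact memLat_add (memLat_mono hτσ hu) (memLat_zsmul k hv)

end Lattices

section Fans

variable {n d : ℕ} {F : Finset (Set (V n))} {σ τ : Set (V n)}

lemma StronglyConvex.zero_mem (h : StronglyConvex σ) : (0 : V n) ∈ σ :=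
  (h.symm ▸ Set.mem_singleton 0 : (0 : V n) ∈ σ ∩ -σ).1

lemma IsFan.zero_mem (hF : IsFan F) (hσ : σ ∈ F) : (0 : V n) ∈ σ :=
  (hF.convex σ hσ).zero_mem

lemma IsFaceOf.eq_of_dimC_le (h : IsFaceOf τ σ) (hd : dimC σ ≤ dimC τ) : τ = σ := by
  obtain ⟨ℓ, -, rfl⟩ := h
  have hspan := Submodule.eq_of_le_of_finrank_le (Submodule.span_mono Set.inter_subset_left) hd
  have hker : Submodule.span ℝ σ ≤ LinearMap.ker ℓ :=
    hspan ▸ Submodule.span_le.mpr fun x hx => hx.2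
  exact Set.inter_eq_left.mpr fun x hx => hker (Submodule.subset_span hx)

lemma IsFan.eq_of_subset_of_dimC_le (hF : IsFan F) (hτ : τ ∈ F) (hσ : σ ∈ F) (h : τ ⊆ σ)
    (hd : dimC σ ≤ dimC τ) : τ = σ := by
  have hface := hF.inter_face_left σ hσ τ hτ
  rw [Set.inter_eq_right.mpr h] at hface
  exact hface.eq_of_dimC_le hd

lemma eq_zero_of_dimC_eq_zero (h0 : (0 : V n) ∈ σ) (hd : dimC σ = 0) : σ = {0} := by
  refine Set.eq_singleton_iff_unique_mem.mpr ⟨h0, fun x hx => ?_⟩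
  simpa [Submodule.finrank_eq_zero.mp hd] using (Submodule.subset_span hx : x ∈ Submodule.span ℝ σ)

lemma IsTropicalFan.dimC_le (hF : IsTropicalFan F d) (hσ : σ ∈ F) : dimC σ ≤ d := by
  obtain ⟨η, hση, hη⟩ := F.finite_toSet.exists_le_maximal hσ
  rw [← hF.2.1 η hη.prop fun ρ hρ hηρ => hη.eq_of_le hρ hηρ]
  exact Submodule.finrank_mono (Submodule.span_mono hση)

lemma mem_facets : σ ∈ facets F d τ ↔ σ ∈ F ∧ dimC σ = d ∧ τ ⊆ σ :=
  Finset.mem_filter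

lemma IsFan.facets_eq_singleton (hF : IsFan F) (hτ : τ ∈ F) (hd : dimC τ = d) :
    facets F d τ = {τ} := by
  ext σ
  rw [mem_facets, Finset.mem_singleton]
  constructor
  · rintro ⟨hσ, hσd, hτσ⟩
    exact (hF.eq_of_subset_of_dimC_le hτ hσ hτσ (hσd.trans hd.symm).le).symm
  · rintro rfl
    exact ⟨hτ, hd, subset_rfl⟩

end Fans

section ProductCones

variable {n n' : ℕ} {σ ρ : Set (V n)} {σ' ρ' : Set (V n')}

lemma prodCone_mono (h : σ ⊆ ρ) (h' : σ' ⊆ ρ') : prodCone σ σ' ⊆ prodCone ρ ρ' :=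
  fun _ hx => ⟨h hx.1, h' hx.2⟩

lemma prodCone_subset_prodCone_iff (hσ : σ.Nonempty) (hσ' : σ'.Nonempty) :
    prodCone σ σ' ⊆ prodCone ρ ρ' ↔ σ ⊆ ρ ∧ σ' ⊆ ρ' := by
  rw [prodCone_eq_preimage, prodCone_eq_preimage,
    Set.preimage_subset_preimage_iff (by simp [(finSplit ℝ).surjective.range_eq]),
    Set.prod_subset_prod_iff' (hσ.prod hσ')]

lemma prodCone_inj (hσ : σ.Nonempty) (hσ' : σ'.Nonempty) :
    prodCone σ σ' = prodCone ρ ρ' ↔ σ = ρ ∧ σ' = ρ' := by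
  rw [prodCone_eq_preimage, prodCone_eq_preimage,
    (Set.preimage_injective.mpr (finSplit ℝ).surjective).eq_iff,
    Set.prod_eq_prod_iff_of_nonempty (hσ.prod hσ')]

lemma prodCone_inter_prodCone (σ ρ : Set (V n)) (σ' ρ' : Set (V n')) :
    prodCone σ σ' ∩ prodCone ρ ρ' = prodCone (σ ∩ ρ) (σ' ∩ ρ') := by
  simp only [prodCone_eq_preimage, ← Set.preimage_inter, Set.prod_inter_prod]

lemma stronglyConvex_prodCone (h : StronglyConvex σ) (h' : StronglyConvex σ') :
    StronglyConvex (prodCone σ σ') := by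
  ext x
  have h₁ := Set.ext_iff.mp h (finSplit ℝ x).1
  have h₂ := Set.ext_iff.mp h' (finSplit ℝ x).2
  simp only [Set.mem_inter_iff, Set.mem_neg, Set.mem_singleton_iff] at h₁ h₂ ⊢
  rw [mem_prodCone, mem_prodCone, ← (finSplit ℝ).map_eq_zero_iff, Prod.ext_iff, map_neg,
    Prod.fst_neg, Prod.snd_neg, Prod.fst_zero, Prod.snd_zero, ← h₁, ← h₂]
  exact ⟨fun ⟨⟨a, b⟩, c, d⟩ => ⟨⟨a, c⟩, b, d⟩, fun ⟨⟨a, c⟩, b, d⟩ => ⟨⟨a, b⟩, c, d⟩⟩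

lemma prodCone_inter_ker {ℓ : V n →ₗ[ℝ] ℝ} {ℓ' : V n' →ₗ[ℝ] ℝ} (hℓ : ∀ x ∈ σ, 0 ≤ ℓ x)
    (hℓ' : ∀ y ∈ σ', 0 ≤ ℓ' y) :
    prodCone σ σ' ∩ {x | ℓ.coprod ℓ' (finSplit ℝ x) = 0} =
      prodCone (σ ∩ {x | ℓ x = 0}) (σ' ∩ {y | ℓ' y = 0}) := by
  ext x
  simp only [Set.mem_inter_iff, mem_prodCone, Set.mem_ofPred_eq, LinearMap.coprod_apply]
  constructor
  · rintro ⟨⟨hx, hx'⟩, h⟩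
    have := (add_eq_zero_iff_of_nonneg (hℓ _ hx) (hℓ' _ hx')).mp h
    exact ⟨⟨hx, this.1⟩, hx', this.2⟩
  · rintro ⟨⟨hx, h⟩, hx', h'⟩
    exact ⟨⟨hx, hx'⟩, by rw [h, h', add_zero]⟩

lemma isFaceOf_prodCone_iff {τ : Set (V (n + n'))} (h0 : (0 : V n) ∈ σ) (h0' : (0 : V n') ∈ σ') :
    IsFaceOf τ (prodCone σ σ') ↔
      ∃ τ₁ τ₂, IsFaceOf τ₁ σ ∧ IsFaceOf τ₂ σ' ∧ τ = prodCone τ₁ τ₂ := by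
  constructor
  · rintro ⟨ℓ, hℓ, rfl⟩
    set ℓ₀ := ℓ ∘ₗ (finSplit ℝ).symm.toLinearMap
    have hℓ₀ : ∀ x y, x ∈ σ → y ∈ σ' → 0 ≤ ℓ₀ (x, y) := fun x y hx hy =>
      hℓ ((finSplit ℝ).symm (x, y)) (by simpa [mem_prodCone] using ⟨hx, hy⟩)
    have hdecomp : ∀ x, ℓ x = (ℓ₀ ∘ₗ .inl ℝ _ _).coprod (ℓ₀ ∘ₗ .inr ℝ _ _) (finSplit ℝ x) := by
      intro x
      simp [LinearMap.coprod_comp_inl_inr, ℓ₀]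
    refine ⟨_, _, ⟨ℓ₀ ∘ₗ .inl ℝ _ _, fun x hx => hℓ₀ x 0 hx h0', rfl⟩,
      ⟨ℓ₀ ∘ₗ .inr ℝ _ _, fun y hy => hℓ₀ 0 y h0 hy, rfl⟩, ?_⟩
    simp only [hdecomp]
    exact prodCone_inter_ker (fun x hx => hℓ₀ x 0 hx h0') (fun y hy => hℓ₀ 0 y h0 hy)
  · rintro ⟨_, _, ⟨ℓ, hℓ, rfl⟩, ⟨ℓ', hℓ', rfl⟩, rfl⟩
    exact ⟨ℓ.coprod ℓ' ∘ₗ (finSplit ℝ).toLinearMap,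
      fun x hx => add_nonneg (hℓ _ hx.1) (hℓ' _ hx.2), (prodCone_inter_ker hℓ hℓ').symm⟩

lemma span_prodCone (h0 : (0 : V n) ∈ σ) (h0' : (0 : V n') ∈ σ') :
    Submodule.span ℝ (prodCone σ σ') =
      ((Submodule.span ℝ σ).prod (Submodule.span ℝ σ')).map (finSplit ℝ).symm.toLinearMap := by
  rw [prodCone_eq_image, ← Submodule.span_prod_eq ℝ h0 h0']
  exact Submodule.span_image (finSplit ℝ).symm.toLinearMap

lemma mem_span_prodCone (h0 : (0 : V n) ∈ σ) (h0' : (0 : V n') ∈ σ') {x : V (n + n')} :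
    x ∈ Submodule.span ℝ (prodCone σ σ') ↔
      (finSplit ℝ x).1 ∈ Submodule.span ℝ σ ∧ (finSplit ℝ x).2 ∈ Submodule.span ℝ σ' := by
  rw [span_prodCone h0 h0', Submodule.map_equiv_eq_comap_symm, LinearEquiv.symm_symm]
  rfl

lemma memLat_prodCone (h0 : (0 : V n) ∈ σ) (h0' : (0 : V n') ∈ σ') {v : Fin (n + n') → ℤ} :
    memLat (prodCone σ σ') v ↔ memLat σ (finSplit ℤ v).1 ∧ memLat σ' (finSplit ℤ v).2 :=
  mem_span_prodCone h0 h0'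

lemma dimC_prodCone (h0 : (0 : V n) ∈ σ) (h0' : (0 : V n') ∈ σ') :
    dimC (prodCone σ σ') = dimC σ + dimC σ' := by
  rw [dimC, span_prodCone h0 h0', LinearEquiv.finrank_map_eq, Submodule.finrank_prod]
  rfl

lemma fst_image_prodCone (hσ' : σ'.Nonempty) :
    (fun x => (finSplit ℝ x).1) '' prodCone σ σ' = σ := by
  rw [prodCone_eq_image, Set.image_image]
  simpa using Set.fst_image_prod σ hσ'

lemma snd_image_prodCone (hσ : σ.Nonempty) :
    (fun x => (finSplit ℝ x).2) '' prodCone σ σ' = σ' := by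
  rw [prodCone_eq_image, Set.image_image]
  simpa using Set.snd_image_prod hσ σ'

end ProductCones

section Rationality

variable {n n' : ℕ}

lemma coe_hull_intVec_image (S : Finset (Fin n → ℤ)) :
    (PointedCone.hull ℝ (intVec '' ↑S : Set (V n)) : Set (V n)) =
      {x | ∃ lam : (Fin n → ℤ) → ℝ, (∀ v, 0 ≤ lam v) ∧ x = ∑ v ∈ S, lam v • intVec v} := by
  ext x
  constructor
  · intro hx
    induction hx using Submodule.span_induction with
    | mem x hx =>
      obtain ⟨v, hv, rfl⟩ := hx
      refine ⟨Pi.single v 1, fun u => ?_, ?_⟩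
      · by_cases h : u = v <;> simp [h]
      · simp [Pi.single_apply, Finset.mem_coe.mp hv]
    | zero => exact ⟨0, fun _ => le_rfl, by simp⟩
    | add x y _ _ hx hy =>
      obtain ⟨lam, hlam, rfl⟩ := hx
      obtain ⟨mu, hmu, rfl⟩ := hy
      exact ⟨lam + mu, fun v => add_nonneg (hlam v) (hmu v), by
        simp only [Pi.add_apply, add_smul, Finset.sum_add_distrib]⟩
    | smul c x _ hx =>
      obtain ⟨lam, hlam, rfl⟩ := hx
      refine ⟨(c : ℝ) • lam, fun v => mul_nonneg c.2 (hlam v), ?_⟩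
      simp only [Finset.smul_sum, Pi.smul_apply, smul_eq_mul, mul_smul]
      rfl
  · rintro ⟨lam, hlam, rfl⟩
    refine Submodule.sum_mem _ fun v hv => ?_
    exact Submodule.smul_mem _ (⟨lam v, hlam v⟩ : {c : ℝ // 0 ≤ c})
      (Submodule.subset_span ⟨v, hv, rfl⟩)

lemma isRationalCone_iff_eq_hull {σ : Set (V n)} :
    IsRationalCone σ ↔
      ∃ S : Finset (Fin n → ℤ),
        σ = (PointedCone.hull ℝ (intVec '' ↑S : Set (V n)) : Set (V n)) := by
  simp only [IsRationalCone, coe_hull_intVec_image]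

lemma prodCone_hull (s : Set (V n)) (s' : Set (V n')) :
    prodCone (PointedCone.hull ℝ s : Set (V n)) (PointedCone.hull ℝ s' : Set (V n')) =
      (PointedCone.hull ℝ ((finSplit ℝ).symm '' insert 0 s ×ˢ insert 0 s') : Set (V (n + n'))) := by
  simp only [PointedCone.hull]
  rw [prodCone_eq_image, ← Submodule.prod_coe, ← Submodule.span_insert_zero (s := s),
    ← Submodule.span_insert_zero (s := s'),
    ← Submodule.span_prod_eq _ (Set.mem_insert _ _) (Set.mem_insert _ _)]
  exact (congrArg SetLike.coe
    (Submodule.span_image ((finSplit ℝ).symm.toLinearMap.restrictScalars {c : ℝ // 0 ≤ c}))).symm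

lemma intVec_finSplit_symm_image (A : Set (Fin n → ℤ)) (B : Set (Fin n' → ℤ)) :
    intVec '' ((finSplit ℤ).symm '' A ×ˢ B) =
      (finSplit ℝ).symm '' (intVec '' A) ×ˢ (intVec '' B) := by
  rw [Set.prod_image_image_eq, Set.image_image, Set.image_image]
  exact Set.image_congr fun p _ => intVec_finSplit_symm p

lemma isRationalCone_prodCone {σ : Set (V n)} {σ' : Set (V n')} (h : IsRationalCone σ)
    (h' : IsRationalCone σ') : IsRationalCone (prodCone σ σ') := by
  obtain ⟨S, rfl⟩ := isRationalCone_iff_eq_hull.mp h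
  obtain ⟨S', rfl⟩ := isRationalCone_iff_eq_hull.mp h'
  refine isRationalCone_iff_eq_hull.mpr
    ⟨(insert 0 S ×ˢ insert 0 S').image (finSplit ℤ).symm, ?_⟩
  rw [prodCone_hull, Finset.coe_image, Finset.coe_product, Finset.coe_insert, Finset.coe_insert,
    intVec_finSplit_symm_image, Set.image_insert_eq, Set.image_insert_eq, intVec_zero, intVec_zero]

end Rationality

section NormalVectors

variable {n n' : ℕ} {σ τ : Set (V n)} {σ' τ' : Set (V n')}

lemma isNormalVector_prodCone_left_iff (hτ : (0 : V n) ∈ τ) (hτ' : (0 : V n') ∈ τ') (hτσ : τ ⊆ σ)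
    (v : Fin (n + n') → ℤ) :
    IsNormalVector (prodCone σ τ') (prodCone τ τ') v ↔
      IsNormalVector σ τ (finSplit ℤ v).1 ∧ memLat τ' (finSplit ℤ v).2 := by
  have hσ := hτσ hτ
  have hsub : prodCone τ τ' ⊆ prodCone σ τ' := prodCone_mono hτσ subset_rfl
  obtain ⟨⟨a, b⟩, rfl⟩ := (finSplit ℤ).symm.surjective v
  simp only [LinearEquiv.apply_symm_apply]
  constructor
  · rintro ⟨hv, ⟨y, hy, z, hz, hyz⟩, hgen⟩
    obtain ⟨ha, hb⟩ : memLat σ a ∧ memLat τ' b := by simpa [memLat_prodCone hσ hτ'] using hv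
    rw [memLat_iff_exists_add_zsmul_iff hsub hv] at hgen
    refine ⟨⟨ha, ⟨(finSplit ℝ y).1, hy.1, (finSplit ℝ z).1, ((mem_span_prodCone hτ hτ').mp hz).1,
      ?_⟩, ?_⟩, hb⟩
    · simpa [finSplit_intVec] using congrArg (fun x => (finSplit ℝ x).1) hyz
    · rw [memLat_iff_exists_add_zsmul_iff hτσ ha]
      intro w hw
      obtain ⟨k, hk⟩ := hgen ((finSplit ℤ).symm (w, 0))
        ((memLat_prodCone hσ hτ').mpr (by simpa using ⟨hw, memLat_zero⟩))
      refine ⟨k, ?_⟩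
      simpa only [map_sub, map_zsmul, LinearEquiv.apply_symm_apply, Prod.fst_sub, Prod.smul_fst]
        using ((memLat_prodCone hτ hτ').mp hk).1
  · rintro ⟨⟨ha, ⟨y, hy, z, hz, hyz⟩, hgen⟩, hb⟩
    have hv : memLat (prodCone σ τ') ((finSplit ℤ).symm (a, b)) :=
      (memLat_prodCone hσ hτ').mpr (by simpa using ⟨ha, hb⟩)
    rw [memLat_iff_exists_add_zsmul_iff hτσ ha] at hgen
    refine ⟨hv, ⟨(finSplit ℝ).symm (y, 0), by simpa [mem_prodCone] using ⟨hy, hτ'⟩,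
      (finSplit ℝ).symm (z, intVec b),
      (mem_span_prodCone hτ hτ').mpr (by simpa using ⟨hz, hb⟩), ?_⟩, ?_⟩
    · apply (finSplit ℝ).injective
      simp [finSplit_intVec, hyz]
    · rw [memLat_iff_exists_add_zsmul_iff hsub hv]
      intro W hW
      obtain ⟨hw, hw'⟩ := (memLat_prodCone hσ hτ').mp hW
      obtain ⟨k, hk⟩ := hgen _ hw
      refine ⟨k, (memLat_prodCone hτ hτ').mpr ?_⟩
      simpa only [map_sub, map_zsmul, LinearEquiv.apply_symm_apply, Prod.fst_sub, Prod.snd_sub,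
        Prod.smul_fst, Prod.smul_snd] using ⟨hk, memLat_sub hw' (memLat_zsmul k hb)⟩

lemma isNormalVector_prodCone_right_iff (hτ : (0 : V n) ∈ τ) (hτ' : (0 : V n') ∈ τ')
    (hτσ : τ' ⊆ σ') (v : Fin (n + n') → ℤ) :
    IsNormalVector (prodCone τ σ') (prodCone τ τ') v ↔
      IsNormalVector σ' τ' (finSplit ℤ v).2 ∧ memLat τ (finSplit ℤ v).1 := by
  have hσ := hτσ hτ'
  have hsub : prodCone τ τ' ⊆ prodCone τ σ' := prodCone_mono subset_rfl hτσ
  obtain ⟨⟨a, b⟩, rfl⟩ := (finSplit ℤ).symm.surjective v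
  simp only [LinearEquiv.apply_symm_apply]
  constructor
  · rintro ⟨hv, ⟨y, hy, z, hz, hyz⟩, hgen⟩
    obtain ⟨ha, hb⟩ : memLat τ a ∧ memLat σ' b := by simpa [memLat_prodCone hτ hσ] using hv
    rw [memLat_iff_exists_add_zsmul_iff hsub hv] at hgen
    refine ⟨⟨hb, ⟨(finSplit ℝ y).2, hy.2, (finSplit ℝ z).2, ((mem_span_prodCone hτ hτ').mp hz).2,
      ?_⟩, ?_⟩, ha⟩
    · simpa [finSplit_intVec] using congrArg (fun x => (finSplit ℝ x).2) hyz
    · rw [memLat_iff_exists_add_zsmul_iff hτσ hb]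
      intro w hw
      obtain ⟨k, hk⟩ := hgen ((finSplit ℤ).symm (0, w))
        ((memLat_prodCone hτ hσ).mpr (by simpa using ⟨memLat_zero, hw⟩))
      refine ⟨k, ?_⟩
      simpa only [map_sub, map_zsmul, LinearEquiv.apply_symm_apply, Prod.snd_sub, Prod.smul_snd]
        using ((memLat_prodCone hτ hτ').mp hk).2
  · rintro ⟨⟨hb, ⟨y, hy, z, hz, hyz⟩, hgen⟩, ha⟩
    have hv : memLat (prodCone τ σ') ((finSplit ℤ).symm (a, b)) :=
      (memLat_prodCone hτ hσ).mpr (by simpa using ⟨ha, hb⟩)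
    rw [memLat_iff_exists_add_zsmul_iff hτσ hb] at hgen
    refine ⟨hv, ⟨(finSplit ℝ).symm (0, y), by simpa [mem_prodCone] using ⟨hτ, hy⟩,
      (finSplit ℝ).symm (intVec a, z),
      (mem_span_prodCone hτ hτ').mpr (by simpa using ⟨ha, hz⟩), ?_⟩, ?_⟩
    · apply (finSplit ℝ).injective
      simp [finSplit_intVec, hyz]
    · rw [memLat_iff_exists_add_zsmul_iff hsub hv]
      intro W hW
      obtain ⟨hw, hw'⟩ := (memLat_prodCone hτ hσ).mp hW
      obtain ⟨k, hk⟩ := hgen _ hw'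
      refine ⟨k, (memLat_prodCone hτ hτ').mpr ?_⟩
      simpa only [map_sub, map_zsmul, LinearEquiv.apply_symm_apply, Prod.fst_sub, Prod.snd_sub,
        Prod.smul_fst, Prod.smul_snd] using ⟨memLat_sub hw (memLat_zsmul k ha), hk⟩

end NormalVectors

section ProductFan

variable {n n' d d' : ℕ} {F : Finset (Set (V n))} {F' : Finset (Set (V n'))}
  {τ : Set (V n)} {τ' : Set (V n')}

lemma mem_prodFan {X : Set (V (n + n'))} :
    X ∈ prodFan F F' ↔ ∃ σ ∈ F, ∃ σ' ∈ F', prodCone σ σ' = X := by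
  simp only [prodFan, Finset.mem_image, Finset.mem_product, Prod.exists, and_assoc,
    exists_and_left]

lemma prodCone_mem_prodFan {σ : Set (V n)} {σ' : Set (V n')} (hσ : σ ∈ F) (hσ' : σ' ∈ F') :
    prodCone σ σ' ∈ prodFan F F' :=
  mem_prodFan.mpr ⟨σ, hσ, σ', hσ', rfl⟩

lemma IsFan.prodFan (hF : IsFan F) (hF' : IsFan F') : IsFan (prodFan F F') where
  nonempty := hF.nonempty.product hF'.nonempty |>.image _
  rat := by
    simp only [mem_prodFan, forall_exists_index, and_imp]
    rintro _ σ hσ σ' hσ' rfl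
    exact isRationalCone_prodCone (hF.rat σ hσ) (hF'.rat σ' hσ')
  convex := by
    simp only [mem_prodFan, forall_exists_index, and_imp]
    rintro _ σ hσ σ' hσ' rfl
    exact stronglyConvex_prodCone (hF.convex σ hσ) (hF'.convex σ' hσ')
  faces_mem := by
    simp only [mem_prodFan, forall_exists_index, and_imp]
    rintro _ σ hσ σ' hσ' rfl τ hτ
    obtain ⟨τ₁, τ₂, h₁, h₂, rfl⟩ :=
      (isFaceOf_prodCone_iff (hF.zero_mem hσ) (hF'.zero_mem hσ')).mp hτ
    exact ⟨τ₁, hF.faces_mem σ hσ τ₁ h₁, τ₂, hF'.faces_mem σ' hσ' τ₂ h₂, rfl⟩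
  inter_face_left := by
    simp only [mem_prodFan, forall_exists_index, and_imp]
    rintro _ σ hσ σ' hσ' rfl _ ρ hρ ρ' hρ' rfl
    rw [prodCone_inter_prodCone, isFaceOf_prodCone_iff (hF.zero_mem hσ) (hF'.zero_mem hσ')]
    exact ⟨_, _, hF.inter_face_left σ hσ ρ hρ, hF'.inter_face_left σ' hσ' ρ' hρ', rfl⟩
  inter_face_right := by
    simp only [mem_prodFan, forall_exists_index, and_imp]
    rintro _ σ hσ σ' hσ' rfl _ ρ hρ ρ' hρ' rfl
    rw [prodCone_inter_prodCone, isFaceOf_prodCone_iff (hF.zero_mem hρ) (hF'.zero_mem hρ')]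
    exact ⟨_, _, hF.inter_face_right σ hσ ρ hρ, hF'.inter_face_right σ' hσ' ρ' hρ', rfl⟩

lemma IsTropicalFan.dimC_prodFan_of_maximal (hF : IsTropicalFan F d) (hF' : IsTropicalFan F' d')
    {X : Set (V (n + n'))} (hX : X ∈ prodFan F F')
    (hmax : ∀ Y ∈ prodFan F F', X ⊆ Y → X = Y) : dimC X = d + d' := by
  obtain ⟨σ, hσ, σ', hσ', rfl⟩ := mem_prodFan.mp hX
  have h0 := hF.1.zero_mem hσ
  have h0' := hF'.1.zero_mem hσ'
  have hmaxσ : ∀ ρ ∈ F, σ ⊆ ρ → σ = ρ := fun ρ hρ hσρ =>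
    ((prodCone_inj ⟨0, h0⟩ ⟨0, h0'⟩).mp
      (hmax _ (prodCone_mem_prodFan hρ hσ') (prodCone_mono hσρ subset_rfl))).1
  have hmaxσ' : ∀ ρ' ∈ F', σ' ⊆ ρ' → σ' = ρ' := fun ρ' hρ' hσρ' =>
    ((prodCone_inj ⟨0, h0⟩ ⟨0, h0'⟩).mp
      (hmax _ (prodCone_mem_prodFan hσ hρ') (prodCone_mono subset_rfl hσρ'))).2
  rw [dimC_prodCone h0 h0', hF.2.1 σ hσ hmaxσ, hF'.2.1 σ' hσ' hmaxσ']

lemma facets_prodFan (hF : IsTropicalFan F d) (hF' : IsTropicalFan F' d') (hτ : τ ∈ F)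
    (hτ' : τ' ∈ F') :
    facets (prodFan F F') (d + d') (prodCone τ τ') =
      (facets F d τ ×ˢ facets F' d' τ').image fun p => prodCone p.1 p.2 := by
  ext X
  simp only [mem_facets, Finset.mem_image, Finset.mem_product, Prod.exists]
  constructor
  · rintro ⟨hX, hXd, hτX⟩
    obtain ⟨σ, hσ, σ', hσ', rfl⟩ := mem_prodFan.mp hX
    have hle := hF.dimC_le hσ
    have hle' := hF'.dimC_le hσ'
    rw [dimC_prodCone (hF.1.zero_mem hσ) (hF'.1.zero_mem hσ')] at hXd
    obtain ⟨hτσ, hτσ'⟩ :=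
      (prodCone_subset_prodCone_iff ⟨0, hF.1.zero_mem hτ⟩ ⟨0, hF'.1.zero_mem hτ'⟩).mp hτX
    exact ⟨σ, σ', ⟨⟨hσ, by omega, hτσ⟩, hσ', by omega, hτσ'⟩, rfl⟩
  · rintro ⟨σ, σ', ⟨⟨hσ, hσd, hτσ⟩, hσ', hσd', hτσ'⟩, rfl⟩
    refine ⟨prodCone_mem_prodFan hσ hσ', ?_, prodCone_mono hτσ hτσ'⟩
    rw [dimC_prodCone (hF.1.zero_mem hσ) (hF'.1.zero_mem hσ'), hσd, hσd']

lemma sum_facets_prodFan {M : Type*} [AddCommMonoid M] (hF : IsTropicalFan F d)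
    (hF' : IsTropicalFan F' d') (hτ : τ ∈ F) (hτ' : τ' ∈ F') (f : Set (V (n + n')) → M) :
    ∑ X ∈ facets (prodFan F F') (d + d') (prodCone τ τ'), f X =
      ∑ σ ∈ facets F d τ, ∑ σ' ∈ facets F' d' τ', f (prodCone σ σ') := by
  rw [facets_prodFan hF hF' hτ hτ', Finset.sum_image, Finset.sum_product]
  rintro ⟨σ, σ'⟩ hp ⟨ρ, ρ'⟩ - h
  obtain ⟨hσ, hσ'⟩ := Finset.mem_product.mp hp
  exact Prod.ext_iff.mpr ((prodCone_inj ⟨0, hF.1.zero_mem (mem_facets.mp hσ).1⟩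
    ⟨0, hF'.1.zero_mem (mem_facets.mp hσ').1⟩).mp h)

lemma forall_mem_facets_prodFan (hF : IsTropicalFan F d) (hF' : IsTropicalFan F' d') (hτ : τ ∈ F)
    (hτ' : τ' ∈ F') {P : Set (V (n + n')) → Prop} :
    (∀ X ∈ facets (prodFan F F') (d + d') (prodCone τ τ'), P X) ↔
      ∀ σ ∈ facets F d τ, ∀ σ' ∈ facets F' d' τ', P (prodCone σ σ') := by
  simp only [facets_prodFan hF hF' hτ hτ', Finset.forall_mem_image, Finset.mem_product, and_imp,
    Prod.forall]
  exact ⟨fun h σ hσ σ' hσ' => h σ σ' hσ hσ', fun h σ σ' hσ hσ' => h σ hσ σ' hσ'⟩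

end ProductFan

section Balancing

variable {n n' d d' : ℕ} {F : Finset (Set (V n))} {F' : Finset (Set (V n'))}
  {τ : Set (V n)} {τ' : Set (V n')}

def IsBalancedAt (F : Finset (Set (V n))) (d : ℕ) (w : Set (V n) → ℤ) (τ : Set (V n)) : Prop :=
  ∀ u : Set (V n) → Fin n → ℤ, (∀ σ ∈ facets F d τ, IsNormalVector σ τ (u σ)) →
    memLat τ (∑ σ ∈ facets F d τ, w σ • u σ)

lemma isBalancedAt_one_iff :
    IsBalancedAt F d 1 τ ↔ ∀ u : Set (V n) → Fin n → ℤ,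
      (∀ σ ∈ facets F d τ, IsNormalVector σ τ (u σ)) → memLat τ (∑ σ ∈ facets F d τ, u σ) := by
  simp only [IsBalancedAt, Pi.one_apply, one_smul]

lemma isBalancedAt_prodCone_iff_of_dimC_left (hF : IsTropicalFan F d) (hF' : IsTropicalFan F' d')
    (hτ : τ ∈ F) (hτd : dimC τ = d) (hτ' : τ' ∈ F') (w : Set (V (n + n')) → ℤ) :
    IsBalancedAt (prodFan F F') (d + d') w (prodCone τ τ') ↔
      IsBalancedAt F' d' (fun σ' => w (prodCone τ σ')) τ' := by
  have h0 := hF.1.zero_mem hτ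
  have h0' := hF'.1.zero_mem hτ'
  have hnormal : ∀ σ' ∈ facets F' d' τ', ∀ v, IsNormalVector (prodCone τ σ') (prodCone τ τ') v ↔
      IsNormalVector σ' τ' (finSplit ℤ v).2 ∧ memLat τ (finSplit ℤ v).1 := fun σ' hσ' =>
    isNormalVector_prodCone_right_iff h0 h0' (mem_facets.mp hσ').2.2
  simp only [IsBalancedAt, forall_mem_facets_prodFan hF hF' hτ hτ',
    sum_facets_prodFan hF hF' hτ hτ',
    hF.1.facets_eq_singleton hτ hτd, Finset.mem_singleton, forall_eq, Finset.sum_singleton,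
    memLat_prodCone h0 h0', map_sum, map_zsmul, Prod.fst_sum, Prod.snd_sum, Prod.smul_fst,
    Prod.smul_snd]
  constructor
  · intro h u hu
    set U := fun X => (finSplit ℤ).symm (0, u ((fun x => (finSplit ℝ x).2) '' X))
    have hU : ∀ σ', U (prodCone τ σ') = (finSplit ℤ).symm (0, u σ') := fun σ' => by
      simp only [U, snd_image_prodCone ⟨0, h0⟩]
    have hbal := h U fun σ' hσ' => by
      rw [hU, hnormal σ' hσ', LinearEquiv.apply_symm_apply]
      exact ⟨hu σ' hσ', memLat_zero⟩
    simpa only [hU, LinearEquiv.apply_symm_apply] using hbal.2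
  · intro h U hU
    exact ⟨memLat_sum fun σ' hσ' => memLat_zsmul _ ((hnormal σ' hσ' _).mp (hU σ' hσ')).2,
      h _ fun σ' hσ' => ((hnormal σ' hσ' _).mp (hU σ' hσ')).1⟩

lemma isBalancedAt_prodCone_iff_of_dimC_right (hF : IsTropicalFan F d)
    (hF' : IsTropicalFan F' d') (hτ : τ ∈ F) (hτ' : τ' ∈ F') (hτd' : dimC τ' = d')
    (w : Set (V (n + n')) → ℤ) :
    IsBalancedAt (prodFan F F') (d + d') w (prodCone τ τ') ↔
      IsBalancedAt F d (fun σ => w (prodCone σ τ')) τ := by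
  have h0 := hF.1.zero_mem hτ
  have h0' := hF'.1.zero_mem hτ'
  have hnormal : ∀ σ ∈ facets F d τ, ∀ v, IsNormalVector (prodCone σ τ') (prodCone τ τ') v ↔
      IsNormalVector σ τ (finSplit ℤ v).1 ∧ memLat τ' (finSplit ℤ v).2 := fun σ hσ =>
    isNormalVector_prodCone_left_iff h0 h0' (mem_facets.mp hσ).2.2
  simp only [IsBalancedAt, forall_mem_facets_prodFan hF hF' hτ hτ',
    sum_facets_prodFan hF hF' hτ hτ',
    hF'.1.facets_eq_singleton hτ' hτd', Finset.mem_singleton, forall_eq, Finset.sum_singleton,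
    memLat_prodCone h0 h0', map_sum, map_zsmul, Prod.fst_sum, Prod.snd_sum, Prod.smul_fst,
    Prod.smul_snd]
  constructor
  · intro h u hu
    set U := fun X => (finSplit ℤ).symm (u ((fun x => (finSplit ℝ x).1) '' X), 0)
    have hU : ∀ σ, U (prodCone σ τ') = (finSplit ℤ).symm (u σ, 0) := fun σ => by
      simp only [U, fst_image_prodCone ⟨0, h0'⟩]
    have hbal := h U fun σ hσ => by
      rw [hU, hnormal σ hσ, LinearEquiv.apply_symm_apply]
      exact ⟨hu σ hσ, memLat_zero⟩
    simpa only [hU, LinearEquiv.apply_symm_apply] using hbal.1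
  · intro h U hU
    exact ⟨h _ fun σ hσ => ((hnormal σ hσ _).mp (hU σ hσ)).1,
      memLat_sum fun σ hσ => memLat_zsmul _ ((hnormal σ hσ _).mp (hU σ hσ)).2⟩

lemma IsTropicalFan.isBalancedAt (hF : IsTropicalFan F d) (hτ : τ ∈ F) (hτd : dimC τ = d - 1) :
    IsBalancedAt F d 1 τ :=
  isBalancedAt_one_iff.mpr (hF.2.2 τ hτ hτd)

theorem IsTropicalFan.prodFan (hF : IsTropicalFan F d) (hF' : IsTropicalFan F' d') :
    IsTropicalFan (prodFan F F') (d + d') := by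
  refine ⟨hF.1.prodFan hF'.1, fun X hX hmax => hF.dimC_prodFan_of_maximal hF' hX hmax, ?_⟩
  intro X hX hXd
  obtain ⟨τ, hτ, τ', hτ', rfl⟩ := mem_prodFan.mp hX
  have hle := hF.dimC_le hτ
  have hle' := hF'.dimC_le hτ'
  rw [dimC_prodCone (hF.1.zero_mem hτ) (hF'.1.zero_mem hτ')] at hXd
  refine isBalancedAt_one_iff.mp ?_
  -- one factor of a codimension-one product cone is a facet
  rcases (by omega : dimC τ = d ∨ dimC τ' = d') with hτd | hτd'
  · exact (isBalancedAt_prodCone_iff_of_dimC_left hF hF' hτ hτd hτ' 1).mpr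
      (hF'.isBalancedAt hτ' (by omega))
  · exact (isBalancedAt_prodCone_iff_of_dimC_right hF hF' hτ hτ' hτd' 1).mpr
      (hF.isBalancedAt hτ (by omega))

variable {η : Set (V n)} {η' : Set (V n')} {w : Set (V (n + n')) → ℤ}

lemma IrreducibleAt.weight_prodCone_eq_left (hF : IsTropicalFan F d) (hF' : IsTropicalFan F' d')
    (hirr : IrreducibleAt F d η)
    (hw : ∀ X ∈ prodFan F F', dimC X = d + d' - 1 → prodCone η η' ⊆ X →
      IsBalancedAt (prodFan F F') (d + d') w X)
    {σ ρ : Set (V n)} {σ' : Set (V n')} (hσ : σ ∈ facets F d η) (hρ : ρ ∈ facets F d η)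
    (hσ' : σ' ∈ facets F' d' η') : w (prodCone σ σ') = w (prodCone ρ σ') := by
  obtain ⟨hσF, hσd, -⟩ := mem_facets.mp hσ
  obtain ⟨hρF, hρd, -⟩ := mem_facets.mp hρ
  obtain ⟨hσ'F, hσ'd, hησ'⟩ := mem_facets.mp hσ'
  -- for `d = 0` the dimension count below fails (`0 - 1 = 0` in `ℕ`), but all facets are `{0}`
  rcases Nat.eq_zero_or_pos d with rfl | hd
  · rw [eq_zero_of_dimC_eq_zero (hF.1.zero_mem hσF) hσd,
      eq_zero_of_dimC_eq_zero (hF.1.zero_mem hρF) hρd]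
  refine hirr (fun σ => w (prodCone σ σ')) (fun τ hτ hτd hητ => ?_) σ hσ ρ hρ
  refine (isBalancedAt_prodCone_iff_of_dimC_right hF hF' hτ hσ'F hσ'd w).mp
    (hw _ (prodCone_mem_prodFan hτ hσ'F) ?_ (prodCone_mono hητ hησ'))
  rw [dimC_prodCone (hF.1.zero_mem hτ) (hF'.1.zero_mem hσ'F)]
  omega

lemma IrreducibleAt.weight_prodCone_eq_right (hF : IsTropicalFan F d) (hF' : IsTropicalFan F' d')
    (hirr' : IrreducibleAt F' d' η')
    (hw : ∀ X ∈ prodFan F F', dimC X = d + d' - 1 → prodCone η η' ⊆ X →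
      IsBalancedAt (prodFan F F') (d + d') w X)
    {σ : Set (V n)} {σ' ρ' : Set (V n')} (hσ : σ ∈ facets F d η) (hσ' : σ' ∈ facets F' d' η')
    (hρ' : ρ' ∈ facets F' d' η') : w (prodCone σ σ') = w (prodCone σ ρ') := by
  obtain ⟨hσF, hσd, hησ⟩ := mem_facets.mp hσ
  obtain ⟨hσ'F, hσ'd, -⟩ := mem_facets.mp hσ'
  obtain ⟨hρ'F, hρ'd, -⟩ := mem_facets.mp hρ'
  rcases Nat.eq_zero_or_pos d' with rfl | hd'
  · rw [eq_zero_of_dimC_eq_zero (hF'.1.zero_mem hσ'F) hσ'd,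
      eq_zero_of_dimC_eq_zero (hF'.1.zero_mem hρ'F) hρ'd]
  refine hirr' (fun σ' => w (prodCone σ σ')) (fun τ' hτ' hτd' hητ' => ?_) σ' hσ' ρ' hρ'
  refine (isBalancedAt_prodCone_iff_of_dimC_left hF hF' hσF hσd hτ' w).mp
    (hw _ (prodCone_mem_prodFan hσF hτ') ?_ (prodCone_mono hησ hητ'))
  rw [dimC_prodCone (hF.1.zero_mem hσF) (hF'.1.zero_mem hτ')]
  omega

theorem IrreducibleAt.prodFan (hF : IsTropicalFan F d) (hF' : IsTropicalFan F' d') (hη : η ∈ F)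
    (hη' : η' ∈ F') (hirr : IrreducibleAt F d η) (hirr' : IrreducibleAt F' d' η') :
    IrreducibleAt (prodFan F F') (d + d') (prodCone η η') := by
  intro w hw
  simp only [forall_mem_facets_prodFan hF hF' hη hη']
  intro σ hσ σ' hσ' ρ hρ ρ' hρ'
  exact (hirr.weight_prodCone_eq_left hF hF' hw hσ hρ hσ').trans
    (hirr'.weight_prodCone_eq_right hF hF' hw hρ hσ' hρ')

end Balancing

/-- The product of two locally irreducible tropical fans (of pure
dimensions `d` and `d'`) is a tropical fan of pure dimension `d + d'` in `ℝ^{n+n'}`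
and is locally irreducible, i.e. irreducible at every cone `σ × σ'`. -/
theorem prod_locally_irreducible {n n' d d' : ℕ}
    (F : Finset (Set (V n))) (F' : Finset (Set (V n')))
    (hF : IsTropicalFan F d) (hF' : IsTropicalFan F' d')
    (hirr : ∀ η ∈ F, IrreducibleAt F d η)
    (hirr' : ∀ η' ∈ F', IrreducibleAt F' d' η') :
    IsTropicalFan (prodFan F F') (d + d') ∧
    ∀ η ∈ F, ∀ η' ∈ F',
      IrreducibleAt (prodFan F F') (d + d') (prodCone η η') :=
  ⟨hF.prodFan hF', fun η hη η' hη' => (hirr η hη).prodFan hF hF' hη hη' (hirr' η' hη')⟩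

end
end
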